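/- Let α be a real number with 0 < α, let a and k be positive natural numbers and m ≥ 0 a natural number. If δ(a) < k·α and δ(3^m·(a+1)) ≥ k·α, then ‖3^m·(a+1)‖ = ‖a‖ + 3m + 1. -/

import Mathlib

open Real

/-- `Writes n k` means the positive integer `n` can be written using exactly `k` ones
combined by additions and multiplications. -/
inductive Writes : ℕ → ℕ → Prop
  | one : Writes 1 1
  | add {a b m n : ℕ} : Writes a m → Writes b n → Writes (a + b) (m + n)
  | mul {a b m n : ℕ} : Writes a m → Writes b n → Writes (a * b) (m + n)

/-- The integer complexity `‖n‖`: the least number of 1's needed to write `n`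
using additions and multiplications. -/
noncomputable def cpx (n : ℕ) : ℕ := sInf {k | Writes n k}

/-- The defect `δ(n) = ‖n‖ - 3 log₃ n`. -/
noncomputable def defect (n : ℕ) : ℝ := (cpx n : ℝ) - 3 * Real.logb 3 n

/-!
The bound `‖3^m (a+1)‖ ≤ ‖a‖ + 3m + 1` comes from the expression `(1+1+1)^m · (a + 1)`.
Conversely, `δ(a) < kα ≤ δ(3^m (a+1))` gives
`‖3^m (a+1)‖ - ‖a‖ > 3 log₃ (3^m (a+1) / a) ≥ 3m`, which leaves only the value `‖a‖ + 3m + 1`.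
-/

namespace Writes

theorem self {n : ℕ} (hn : 0 < n) : Writes n n := by
  induction n with
  | zero => omega
  | succ n ih =>
    rcases Nat.eq_zero_or_pos n with rfl | hpos
    · exact one
    · exact add (ih hpos) one

theorem three : Writes 3 3 := add (add one one) one

theorem three_pow_mul {n c : ℕ} (h : Writes n c) (m : ℕ) :
    Writes (3 ^ m * n) (3 * m + c) := by
  induction m with
  | zero => simpa using h
  | succ m ih =>
    convert mul three ih using 1 <;> ring

end Writes

theorem writes_cpx {n : ℕ} (hn : 0 < n) : Writes n (cpx n) :=
  Nat.sInf_mem ⟨n, Writes.self hn⟩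

theorem cpx_le_of_writes {n k : ℕ} (h : Writes n k) : cpx n ≤ k := Nat.sInf_le h

theorem cpx_three_pow_mul_succ_le {a : ℕ} (ha : 0 < a) (m : ℕ) :
    cpx (3 ^ m * (a + 1)) ≤ cpx a + 3 * m + 1 := by
  have := cpx_le_of_writes (((writes_cpx ha).add .one).three_pow_mul m)
  omega

theorem logb_three_add_le_logb_of_mul_le {a n m : ℕ} (ha : 0 < a) (h : 3 ^ m * a ≤ n) :
    m + logb 3 a ≤ logb 3 n := by
  have ha' : (0 : ℝ) < a := by exact_mod_cast ha
  have h' : ((3 ^ m * a : ℕ) : ℝ) ≤ n := by exact_mod_cast h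
  calc (m : ℝ) + logb 3 a = logb 3 ((3 ^ m * a : ℕ) : ℝ) := by
        push_cast
        rw [logb_mul (by positivity) ha'.ne', logb_pow, logb_self_eq_one (by norm_num), mul_one]
    _ ≤ logb 3 n := logb_le_logb_of_le (by norm_num) (by positivity) h'

theorem cpx_add_three_mul_lt_of_defect_lt {a n m : ℕ} (ha : 0 < a) (h : 3 ^ m * a ≤ n)
    (hδ : defect a < defect n) : cpx a + 3 * m < cpx n := by
  have hlog := logb_three_add_le_logb_of_mul_le ha h
  unfold defect at hδ
  have : (cpx a : ℝ) + 3 * m < cpx n := by linarith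
  exact_mod_cast this

theorem add_pruning_lemma_general (α : ℝ) (a k : ℕ) (ha : 0 < a)
    (m : ℕ) (hda : defect a < k * α)
    (hd : k * α ≤ defect (3 ^ m * (a + 1))) :
    cpx (3 ^ m * (a + 1)) = cpx a + 3 * m + 1 := by
  have hle := cpx_three_pow_mul_succ_le ha m
  have hlt : cpx a + 3 * m < cpx (3 ^ m * (a + 1)) :=
    cpx_add_three_mul_lt_of_defect_lt ha (Nat.mul_le_mul_left _ a.le_succ) (hda.trans_le hd)
  omega

/-- Additive pruning lemma. -/
theorem add_pruning_lemma (α : ℝ) (hα : 0 < α) (a k : ℕ) (ha : 0 < a) (hk : 0 < k)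
    (m : ℕ) (hda : defect a < k * α)
    (hd : k * α ≤ defect (3 ^ m * (a + 1))) :
    cpx (3 ^ m * (a + 1)) = cpx a + 3 * m + 1 :=
  add_pruning_lemma_general α a k ha m hda hd
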